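/- arXiv:1609.01406 — 6 statements merged into one kernel-verified Lean document; each statement's English description precedes it below -/
import Mathlib

section
/- For a connected bipartite graph G on n vertices, GG(G) = √(n−2) · NGG(G), where GG(G) = Σ_{uv∈E(G)} √((n_u+n_v−2)/(n_u n_v)) and NGG(G) = Σ_{uv∈E(G)} 1/√(n_u n_v). -/
open Finset Real
open scoped Classical

/-- The number of vertices strictly closer to `u` than to `v`. -/
noncomputable def closerCount {V : Type*} (G : SimpleGraph V) [Fintype V] (u v : V) : ℕ :=
  (Finset.univ.filter (fun w => G.dist w u < G.dist w v)).card

/-- The normalized Graovac–Ghorbani index `NGG(G) = Σ_{uv ∈ E(G)} 1/√(n_u n_v)`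
(each unordered edge counted once, via half the sum over ordered adjacent pairs). -/
noncomputable def NGG {V : Type*} (G : SimpleGraph V) [Fintype V] : ℝ :=
  (∑ u : V, ∑ v : V, if G.Adj u v then
      1 / Real.sqrt ((closerCount G u v : ℝ) * (closerCount G v u : ℝ)) else 0) / 2

/-- The Graovac–Ghorbani index `GG(G) = Σ_{uv ∈ E(G)} √((n_u + n_v - 2)/(n_u n_v))`. -/
noncomputable def GG {V : Type*} (G : SimpleGraph V) [Fintype V] : ℝ :=
  (∑ u : V, ∑ v : V, if G.Adj u v then
      Real.sqrt (((closerCount G u v : ℝ) + (closerCount G v u : ℝ) - 2) /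
        ((closerCount G u v : ℝ) * (closerCount G v u : ℝ))) else 0) / 2

/-!
In a connected bipartite graph no vertex is equidistant from the two ends of an edge, so
`n_u + n_v = n` on every edge and each summand of `GG` is `√(n - 2)` times the summand of `NGG`.
-/

namespace SimpleGraph

variable {V : Type*} {G : SimpleGraph V}

/-- Shortest walks from `w` to both ends of the edge, closed up by the edge, form a closed walk of
length `G.dist w u + 1 + G.dist w v`, which is even in a bipartite graph. -/
lemma dist_ne_dist_of_adj (hbip : G.Colorable 2) {u v w : V} (hwu : G.Reachable w u)
    (huv : G.Adj u v) : G.dist w u ≠ G.dist w v := by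
  obtain ⟨p, hp⟩ := hwu.exists_walk_length_eq_dist
  obtain ⟨q, hq⟩ := (hwu.trans huv.reachable).exists_walk_length_eq_dist
  have heven := two_colorable_iff_forall_loop_even.mp hbip w (p.append (q.reverse.cons huv))
  rw [Walk.length_append, Walk.length_cons, Walk.length_reverse, hp, hq] at heven
  intro h
  rw [h] at heven
  exact Nat.not_even_iff_odd.mpr (by simp [parity_simps]) heven

lemma closerCount_add_closerCount [Fintype V] (hconn : G.Connected) (hbip : G.Colorable 2)
    {u v : V} (huv : G.Adj u v) : closerCount G u v + closerCount G v u = Fintype.card V := by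
  have hcompl : univ.filter (fun w => G.dist w v < G.dist w u) =
      univ.filter (fun w => ¬ G.dist w u < G.dist w v) :=
    filter_congr fun w _ => by
      have := dist_ne_dist_of_adj hbip (hconn w u) huv
      omega
  rw [closerCount, closerCount, hcompl, card_filter_add_card_filter_not, card_univ]

end SimpleGraph

theorem stmt_2_general {V : Type*} [Fintype V] (G : SimpleGraph V) (hconn : G.Connected)
    (hbip : G.Colorable 2) :
    GG G = Real.sqrt ((Fintype.card V : ℝ) - 2) * NGG G := by
  unfold GG NGG
  rw [mul_div_assoc', mul_sum]
  refine congrArg (· / 2) (sum_congr rfl fun u _ => ?_)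
  rw [mul_sum]
  refine sum_congr rfl fun v _ => ?_
  split_ifs with huv
  · rw [← SimpleGraph.closerCount_add_closerCount hconn hbip huv, Nat.cast_add,
      sqrt_div' _ (by positivity), div_eq_mul_one_div]
  · rw [mul_zero]

/-- For a connected bipartite graph on `n ≥ 2` vertices, `GG(G) = √(n-2) · NGG(G)`. -/
theorem stmt_2 {V : Type*} [Fintype V] (G : SimpleGraph V) (hconn : G.Connected)
    (hbip : G.Colorable 2) (hn : 2 ≤ Fintype.card V) :
    GG G = Real.sqrt ((Fintype.card V : ℝ) - 2) * NGG G :=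
  stmt_2_general G hconn hbip
end

section
/- The limit as n → ∞ of Σ_{i=1}^{n−1} 1/√(i(n−i)) equals π. -/
/-!
`x ↦ arcsin (2x/n - 1)` is a primitive of `1/√(x(n-x))` on `(0, n)`, and the integrand decreases
on `(0, n/2]` and increases on `[n/2, n)`. By the mean value theorem, each term of the sum is
bounded above and below by the increment of the primitive over a neighbouring unit interval
(chosen on the side where the integrand is larger, resp. smaller). Summing, the sum lies between
`2 (arcsin (1 - 2/n) - arcsin (2/n))` and `arcsin 1 - arcsin (-1) = π`.
-/

open Filter Real

section Telescoping

variable {F f : ℝ → ℝ} {a b : ℕ}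

theorem exists_mem_Ioo_sub_eq_of_hasDerivAt (hF : ContinuousOn F (Set.Icc a b))
    (hF' : ∀ x ∈ Set.Ioo (a : ℝ) b, HasDerivAt F (f x) x) {u : ℝ}
    (hau : a ≤ u) (hub : u + 1 ≤ b) :
    ∃ c ∈ Set.Ioo u (u + 1), F (u + 1) - F u = f c := by
  obtain ⟨c, hc, hslope⟩ := exists_hasDerivAt_eq_slope F f (lt_add_one u)
    (hF.mono (Set.Icc_subset_Icc hau hub)) fun x hx => hF' x (Set.Ioo_subset_Ioo hau hub hx)
  exact ⟨c, hc, by rw [hslope, add_sub_cancel_left, div_one]⟩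

theorem AntitoneOn.sum_Ioc_le_sub (hab : a ≤ b) (hF : ContinuousOn F (Set.Icc a b))
    (hF' : ∀ x ∈ Set.Ioo (a : ℝ) b, HasDerivAt F (f x) x) (hf : AntitoneOn f (Set.Ioc a b)) :
    ∑ i ∈ Finset.Ioc a b, f i ≤ F b - F a := by
  rw [← Finset.Ico_add_one_add_one_eq_Ioc, ← Finset.sum_Ico_add',
    ← Finset.sum_Ico_sub (fun k : ℕ => F k) hab]
  refine Finset.sum_le_sum fun i hi => ?_
  obtain ⟨hai, hib⟩ : (a : ℝ) ≤ i ∧ (i : ℝ) + 1 ≤ b := by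
    rw [Finset.mem_Ico] at hi; exact ⟨by exact_mod_cast hi.1, by exact_mod_cast hi.2⟩
  obtain ⟨c, ⟨hic, hci⟩, hFc⟩ := exists_mem_Ioo_sub_eq_of_hasDerivAt hF hF' hai hib
  push_cast
  rw [hFc]
  exact hf ⟨hai.trans_lt hic, hci.le.trans hib⟩ ⟨by linarith, hib⟩ hci.le

theorem AntitoneOn.sub_le_sum_Ico (hab : a ≤ b) (hF : ContinuousOn F (Set.Icc a b))
    (hF' : ∀ x ∈ Set.Ioo (a : ℝ) b, HasDerivAt F (f x) x) (hf : AntitoneOn f (Set.Ico a b)) :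
    F b - F a ≤ ∑ i ∈ Finset.Ico a b, f i := by
  rw [← Finset.sum_Ico_sub (fun k : ℕ => F k) hab]
  refine Finset.sum_le_sum fun i hi => ?_
  obtain ⟨hai, hib⟩ : (a : ℝ) ≤ i ∧ (i : ℝ) + 1 ≤ b := by
    rw [Finset.mem_Ico] at hi; exact ⟨by exact_mod_cast hi.1, by exact_mod_cast hi.2⟩
  obtain ⟨c, ⟨hic, hci⟩, hFc⟩ := exists_mem_Ioo_sub_eq_of_hasDerivAt hF hF' hai hib
  push_cast
  rw [hFc]
  exact hf ⟨hai, by linarith⟩ ⟨hai.trans hic.le, hci.trans_le hib⟩ hic.le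

theorem MonotoneOn.sum_Ico_le_sub (hab : a ≤ b) (hF : ContinuousOn F (Set.Icc a b))
    (hF' : ∀ x ∈ Set.Ioo (a : ℝ) b, HasDerivAt F (f x) x) (hf : MonotoneOn f (Set.Ico a b)) :
    ∑ i ∈ Finset.Ico a b, f i ≤ F b - F a := by
  have := hf.neg.sub_le_sum_Ico hab hF.neg fun x hx => (hF' x hx).neg
  simp only [Pi.neg_apply, Finset.sum_neg_distrib] at this
  linarith

theorem MonotoneOn.sub_le_sum_Ioc (hab : a ≤ b) (hF : ContinuousOn F (Set.Icc a b))
    (hF' : ∀ x ∈ Set.Ioo (a : ℝ) b, HasDerivAt F (f x) x) (hf : MonotoneOn f (Set.Ioc a b)) :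
    F b - F a ≤ ∑ i ∈ Finset.Ioc a b, f i := by
  have := hf.neg.sum_Ioc_le_sub hab hF.neg fun x hx => (hF' x hx).neg
  simp only [Pi.neg_apply, Finset.sum_neg_distrib] at this
  linarith

end Telescoping

theorem hasDerivAt_arcsin_two_mul_div_sub_one {n x : ℝ} (hx : 0 < x) (hxn : x < n) :
    HasDerivAt (fun x => arcsin (2 * x / n - 1)) (1 / √(x * (n - x))) x := by
  have hn : 0 < n := hx.trans hxn
  have hinner : HasDerivAt (fun x => 2 * x / n - 1) (2 / n) x := by
    simpa using ((hasDerivAt_id x).const_mul 2).div_const n |>.sub_const 1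
  have hne₁ : 2 * x / n - 1 ≠ -1 := by
    have : 0 < 2 * x / n := by positivity
    linarith
  have hne₂ : 2 * x / n - 1 ≠ 1 := by
    intro h; rw [sub_eq_iff_eq_add, div_eq_iff hn.ne'] at h; linarith
  refine ((hasDerivAt_arcsin hne₁ hne₂).comp x hinner).congr_deriv ?_
  have hsq : 1 - (2 * x / n - 1) ^ 2 = (2 / n) ^ 2 * (x * (n - x)) := by
    field_simp; ring
  rw [hsq, sqrt_mul (by positivity), sqrt_sq (by positivity)]
  have : 0 < √(x * (n - x)) := sqrt_pos.2 (mul_pos hx (sub_pos.2 hxn))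
  field_simp

theorem one_div_sqrt_mul_sub_le {n x y : ℝ} (hx : 0 < x) (hxy : x ≤ y) (hyx : y ≤ n - x) :
    1 / √(y * (n - y)) ≤ 1 / √(x * (n - x)) := by
  have hpos : 0 < x * (n - x) := mul_pos hx (by linarith)
  have hle : x * (n - x) ≤ y * (n - y) := by nlinarith
  exact one_div_le_one_div_of_le (sqrt_pos.2 hpos) (sqrt_le_sqrt hle)

theorem antitoneOn_one_div_sqrt_mul_sub (n : ℝ) :
    AntitoneOn (fun x => 1 / √(x * (n - x))) (Set.Ioc 0 (n / 2)) :=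
  fun x hx y hy hxy => one_div_sqrt_mul_sub_le hx.1 hxy (by linarith [hx.2, hy.2])

theorem monotoneOn_one_div_sqrt_mul_sub (n : ℝ) :
    MonotoneOn (fun x => 1 / √(x * (n - x))) (Set.Ico (n / 2) n) := by
  intro x hx y hy hxy
  have := one_div_sqrt_mul_sub_le (n := n) (x := n - y) (y := n - x) (by linarith [hy.2])
    (by linarith) (by linarith [hx.1, hy.1])
  simpa only [sub_sub_cancel, mul_comm] using this

theorem sum_one_div_sqrt_mul_sub_le_pi {n : ℕ} (hn : 1 ≤ n) :
    ∑ i ∈ Finset.Icc 1 (n - 1), 1 / √((i : ℝ) * ((n : ℝ) - (i : ℝ))) ≤ π := by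
  set F : ℝ → ℝ := fun x => arcsin (2 * x / n - 1)
  set f : ℝ → ℝ := fun x => 1 / √(x * (n - x))
  set m := n / 2
  have hn₀ : (0 : ℝ) < n := by exact_mod_cast hn
  have hm : (m : ℝ) ≤ n / 2 := Nat.cast_div_le
  have hm' : (n : ℝ) / 2 ≤ (m + 1 : ℕ) := by
    rw [div_le_iff₀ two_pos]; exact_mod_cast (by omega : n ≤ (m + 1) * 2)
  have hF : Continuous F := by fun_prop
  have hF' (a b : ℕ) (hb : b ≤ n) (x : ℝ) (hx : x ∈ Set.Ioo (a : ℝ) b) :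
      HasDerivAt F (f x) x :=
    hasDerivAt_arcsin_two_mul_div_sub_one (a.cast_nonneg.trans_lt hx.1)
      (hx.2.trans_le (by exact_mod_cast hb))
  have hsplit : Finset.Icc 1 (n - 1) = Finset.Ioc 0 m ∪ Finset.Ico (m + 1) n := by
    ext; simp only [Finset.mem_Icc, Finset.mem_union, Finset.mem_Ioc, Finset.mem_Ico]; omega
  have hdisj : Disjoint (Finset.Ioc 0 m) (Finset.Ico (m + 1) n) :=
    Finset.disjoint_left.2 fun i h₁ h₂ => by
      simp only [Finset.mem_Ioc, Finset.mem_Ico] at h₁ h₂; omega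
  have hleft : ∑ i ∈ Finset.Ioc 0 m, f i ≤ F m - F 0 := by
    simpa using ((antitoneOn_one_div_sqrt_mul_sub n).mono
      (Set.Ioc_subset_Ioc (Nat.cast_nonneg 0) hm)).sum_Ioc_le_sub
      (Nat.zero_le m) hF.continuousOn (hF' 0 m (by omega))
  have hright : ∑ i ∈ Finset.Ico (m + 1) n, f i ≤ F n - F (m + 1 : ℕ) :=
    ((monotoneOn_one_div_sqrt_mul_sub n).mono (Set.Ico_subset_Ico_left hm')).sum_Ico_le_sub
      (by omega) hF.continuousOn (hF' (m + 1) n le_rfl)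
  have hmid : F m ≤ F (m + 1 : ℕ) := monotone_arcsin (by gcongr; linarith)
  have hF₀ : F 0 = -(π / 2) := by norm_num [F]
  have hFn : F n = π / 2 := by norm_num [F, hn₀.ne']
  rw [hsplit, Finset.sum_union hdisj]
  linarith

theorem two_mul_arcsin_sub_arcsin_le_sum_one_div_sqrt_mul_sub {n : ℕ} (hn : 3 ≤ n) :
    2 * (arcsin (1 - 2 / n) - arcsin (2 / n)) ≤
      ∑ i ∈ Finset.Icc 1 (n - 1), 1 / √((i : ℝ) * ((n : ℝ) - (i : ℝ))) := by
  set F : ℝ → ℝ := fun x => arcsin (2 * x / n - 1)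
  set f : ℝ → ℝ := fun x => 1 / √(x * (n - x))
  set m := n / 2
  have hn₀ : (0 : ℝ) < n := by positivity
  have hm : (m : ℝ) ≤ n / 2 := Nat.cast_div_le
  have hm' : (n : ℝ) ≤ 2 * m + 1 := by exact_mod_cast (by omega : n ≤ 2 * m + 1)
  have hF : Continuous F := by fun_prop
  have hF' (a b : ℕ) (hb : b ≤ n) (x : ℝ) (hx : x ∈ Set.Ioo (a : ℝ) b) :
      HasDerivAt F (f x) x :=
    hasDerivAt_arcsin_two_mul_div_sub_one (a.cast_nonneg.trans_lt hx.1)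
      (hx.2.trans_le (by exact_mod_cast hb))
  have hsub : Finset.Ico 1 m ∪ Finset.Ioc (m + 1) (n - 1) ⊆ Finset.Icc 1 (n - 1) := by
    intro i; simp only [Finset.mem_Icc, Finset.mem_union, Finset.mem_Ioc, Finset.mem_Ico]; omega
  have hdisj : Disjoint (Finset.Ico 1 m) (Finset.Ioc (m + 1) (n - 1)) :=
    Finset.disjoint_left.2 fun i h₁ h₂ => by
      simp only [Finset.mem_Ioc, Finset.mem_Ico] at h₁ h₂; omega
  have hleft : F m - F 1 ≤ ∑ i ∈ Finset.Ico 1 m, f i := by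
    simpa using ((antitoneOn_one_div_sqrt_mul_sub n).mono
      fun x hx => ⟨(Nat.cast_pos.2 one_pos).trans_le hx.1, hx.2.le.trans hm⟩).sub_le_sum_Ico
      (by omega) hF.continuousOn (hF' 1 m (by omega))
  have hright : F (n - 1 : ℕ) - F (m + 1 : ℕ) ≤ ∑ i ∈ Finset.Ioc (m + 1) (n - 1), f i :=
    ((monotoneOn_one_div_sqrt_mul_sub n).mono fun x hx => ⟨by push_cast at hx; linarith [hx.1],
      hx.2.trans_lt (Nat.cast_lt.2 (by omega))⟩).sub_le_sum_Ioc
      (by omega) hF.continuousOn (hF' (m + 1) (n - 1) (by omega))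
  have hFm : -arcsin (2 / n) ≤ F m := by
    rw [← arcsin_neg]
    exact monotone_arcsin
      (by rw [div_sub_one hn₀.ne', ← neg_div, div_le_div_iff_of_pos_right hn₀]; linarith)
  have hFm₁ : F (m + 1 : ℕ) ≤ arcsin (2 / n) :=
    monotone_arcsin
      (by rw [div_sub_one hn₀.ne', div_le_div_iff_of_pos_right hn₀]; push_cast; linarith)
  have hF₁ : F 1 = -arcsin (1 - 2 / n) := by
    rw [← arcsin_neg]; simp only [F]; congr 1; ring
  have hFn₁ : F (n - 1 : ℕ) = arcsin (1 - 2 / n) := by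
    simp only [F]; rw [Nat.cast_sub (by omega)]; congr 1; field_simp; ring
  calc 2 * (arcsin (1 - 2 / n) - arcsin (2 / n))
      ≤ F m - F 1 + (F (n - 1 : ℕ) - F (m + 1 : ℕ)) := by linarith
    _ ≤ ∑ i ∈ Finset.Ico 1 m ∪ Finset.Ioc (m + 1) (n - 1), f i := by
      rw [Finset.sum_union hdisj]; exact add_le_add hleft hright
    _ ≤ _ := Finset.sum_le_sum_of_subset_of_nonneg hsub fun i _ _ => by positivity

/-- `lim_{n → ∞} Σ_{i=1}^{n-1} 1/√(i(n-i)) = π`. -/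
theorem stmt_4 :
    Tendsto (fun n : ℕ => ∑ i ∈ Finset.Icc 1 (n - 1),
        1 / Real.sqrt ((i : ℝ) * ((n : ℝ) - (i : ℝ)))) atTop (nhds Real.pi) := by
  have htwo_div : Tendsto (fun n : ℕ => 2 / (n : ℝ)) atTop (nhds 0) :=
    tendsto_const_div_atTop_nhds_zero_nat 2
  have hlower :
      Tendsto (fun n : ℕ => 2 * (arcsin (1 - 2 / n) - arcsin (2 / n))) atTop (nhds π) := by
    have := ((continuous_arcsin.tendsto _).comp (htwo_div.const_sub 1)).sub
      ((continuous_arcsin.tendsto _).comp htwo_div) |>.const_mul 2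
    simpa [Function.comp_def, mul_div_cancel₀] using this
  refine tendsto_of_tendsto_of_tendsto_of_le_of_le' hlower tendsto_const_nhds ?_ ?_
  · filter_upwards [eventually_ge_atTop 3] with n hn
    exact two_mul_arcsin_sub_arcsin_le_sum_one_div_sqrt_mul_sub hn
  · filter_upwards [eventually_ge_atTop 1] with n hn
    exact sum_one_div_sqrt_mul_sub_le_pi hn
end

section
/- As n → ∞, GG(P_n) ~ π√(n−2), i.e., the ratio GG(P_n)/(π√(n−2)) tends to 1, where GG(P_n) = √(n−2) · Σ_{i=1}^{n−1} 1/√(i(n−i)). -/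
/-!
Write `f(x) = 1/√(x(n-x))`, so that `GG(P_n) = √(n-2) · Σ_{0<i<n} f(i)`. The function `f` has
primitive `arcsin(2x/n - 1)`, which increases by exactly `π` over `(0, n)`. Since `f` is symmetric
about `n/2` and decreasing on `(0, n/2]`, the sum lies between twice the half-sums over
`0 < i < ⌊n/2⌋` and over `0 < i ≤ ⌊n/2⌋`, and comparing these with the integral squeezes it between
`2(arcsin(-1/n) - arcsin(2/n - 1))` and `2(1/√(n-1) - arcsin(2/n - 1))`, both of which tend to `π`.
-/

open Filter Finset Real Topology

noncomputable def invSqrtMulSub (n x : ℝ) : ℝ := (√(x * (n - x)))⁻¹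

noncomputable def arcsinPrimitive (n x : ℝ) : ℝ := arcsin (2 * x / n - 1)

lemma hasDerivAt_arcsinPrimitive {n x : ℝ} (hx : 0 < x) (hxn : x < n) :
    HasDerivAt (arcsinPrimitive n) (invSqrtMulSub n x) x := by
  have hn : 0 < n := hx.trans hxn
  have hy : 1 - (2 * x / n - 1) ^ 2 = (2 / n) ^ 2 * (x * (n - x)) := by
    field_simp; ring
  have hne₁ : 2 * x / n - 1 ≠ -1 := by
    have : 0 < 2 * x / n := by positivity
    linarith
  have hne₂ : 2 * x / n - 1 ≠ 1 := by
    have : 2 * x / n < 2 := by rw [div_lt_iff₀ hn]; linarith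
    linarith
  have hinner : HasDerivAt (fun y => 2 * y / n - 1) (2 / n) x := by
    simpa using ((hasDerivAt_id x).const_mul 2).div_const n |>.sub_const 1
  refine ((hasDerivAt_arcsin hne₁ hne₂).comp x hinner).congr_deriv ?_
  have hpos : 0 < √(x * (n - x)) := sqrt_pos.2 (mul_pos hx (by linarith))
  rw [hy, sqrt_mul (by positivity), sqrt_sq (by positivity), invSqrtMulSub]
  field_simp

lemma integral_invSqrtMulSub {n a b : ℝ} (ha : 0 < a) (hab : a ≤ b) (hb : b < n) :
    ∫ x in a..b, invSqrtMulSub n x = arcsinPrimitive n b - arcsinPrimitive n a := by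
  have hcont : ContinuousOn (invSqrtMulSub n) (Set.uIcc a b) := by
    rw [Set.uIcc_of_le hab]
    refine ContinuousOn.inv₀ (by fun_prop) fun x hx => ?_
    exact (sqrt_pos.2 (mul_pos (ha.trans_le hx.1) (by linarith [hx.2]))).ne'
  refine intervalIntegral.integral_eq_sub_of_hasDerivAt (fun x hx => ?_) hcont.intervalIntegrable
  rw [Set.uIcc_of_le hab] at hx
  exact hasDerivAt_arcsinPrimitive (ha.trans_le hx.1) (hx.2.trans_lt hb)

lemma arcsinPrimitive_mono {n : ℝ} (hn : 0 < n) : Monotone (arcsinPrimitive n) := fun x y hxy =>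
  monotone_arcsin (by gcongr)

lemma invSqrtMulSub_antitoneOn (n : ℝ) : AntitoneOn (invSqrtMulSub n) (Set.Ioc 0 (n / 2)) := by
  intro x hx y hy hxy
  have hpos : 0 < x * (n - x) := mul_pos hx.1 (by linarith [hx.1, hx.2])
  have : x * (n - x) ≤ y * (n - y) := by nlinarith [hy.2]
  exact inv_anti₀ (sqrt_pos.2 hpos) (sqrt_le_sqrt this)

lemma invSqrtMulSub_sub (n x : ℝ) : invSqrtMulSub n (n - x) = invSqrtMulSub n x := by
  rw [invSqrtMulSub, invSqrtMulSub, sub_sub_cancel, mul_comm]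

lemma sum_Ico_one_eq_add_of_symm {M : Type*} [AddCommMonoid M] (g : ℕ → M) {n m : ℕ}
    (hm : 1 ≤ m) (hmn : m ≤ n) (hg : ∀ i ≤ n, g (n - i) = g i) :
    ∑ i ∈ Ico 1 n, g i = ∑ i ∈ Ico 1 m, g i + ∑ i ∈ Ico 1 (n + 1 - m), g i := by
  have hreflect := sum_Ico_reflect g m (Nat.le_succ n)
  rw [Nat.add_sub_cancel_left] at hreflect
  rw [← sum_Ico_consecutive g hm hmn, ← hreflect]
  congr 1
  exact sum_congr rfl fun i hi => (hg i (mem_Ico.1 hi).2.le).symm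

lemma arcsinPrimitive_sub_le_sum_Ico {n : ℝ} {b : ℕ} (hb : 1 ≤ b) (hbn : (b : ℝ) ≤ n / 2) :
    arcsinPrimitive n b - arcsinPrimitive n 1 ≤ ∑ i ∈ Ico 1 b, invSqrtMulSub n i := by
  have hb' : (1 : ℝ) ≤ b := by exact_mod_cast hb
  have hanti : AntitoneOn (invSqrtMulSub n) (Set.Icc (1 : ℕ) b) :=
    (invSqrtMulSub_antitoneOn n).mono (Set.Icc_subset_Ioc (by simp) hbn)
  have := hanti.integral_le_sum_Ico hb
  rwa [Nat.cast_one, integral_invSqrtMulSub one_pos hb' (by linarith)] at this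

lemma sum_Ico_le_arcsinPrimitive_sub {n : ℝ} {b : ℕ} (hb : 1 ≤ b) (hbn : (b : ℝ) ≤ n / 2) :
    ∑ i ∈ Ico 1 b, invSqrtMulSub n (i + 1 : ℕ) ≤ arcsinPrimitive n b - arcsinPrimitive n 1 := by
  have hb' : (1 : ℝ) ≤ b := by exact_mod_cast hb
  have hanti : AntitoneOn (invSqrtMulSub n) (Set.Icc (1 : ℕ) b) :=
    (invSqrtMulSub_antitoneOn n).mono (Set.Icc_subset_Ioc (by simp) hbn)
  have := hanti.sum_le_integral_Ico hb
  rwa [Nat.cast_one, integral_invSqrtMulSub one_pos hb' (by linarith)] at this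

lemma sum_Ico_invSqrtMulSub_eq_add {n m : ℕ} (hm : 1 ≤ m) (hmn : m ≤ n) :
    ∑ i ∈ Ico 1 n, invSqrtMulSub n i =
      ∑ i ∈ Ico 1 m, invSqrtMulSub n i + ∑ i ∈ Ico 1 (n + 1 - m), invSqrtMulSub n i :=
  sum_Ico_one_eq_add_of_symm _ hm hmn fun i hi => by
    rw [Nat.cast_sub hi, invSqrtMulSub_sub]

lemma sum_Ico_invSqrtMulSub_mono (n : ℝ) {a b : ℕ} (hab : a ≤ b) :
    ∑ i ∈ Ico 1 a, invSqrtMulSub n i ≤ ∑ i ∈ Ico 1 b, invSqrtMulSub n i :=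
  sum_le_sum_of_subset_of_nonneg (Ico_subset_Ico_right hab) fun _ _ _ => by
    rw [invSqrtMulSub]; positivity

lemma two_mul_arcsinPrimitive_sub_le_sum {n : ℕ} (hn : 2 ≤ n) :
    2 * (arcsinPrimitive n ((n - 1) / 2) - arcsinPrimitive n 1) ≤
      ∑ i ∈ Ico 1 n, invSqrtMulSub n i := by
  set m := n / 2
  have hmn : (m : ℝ) ≤ n / 2 := by
    rw [le_div_iff₀ two_pos]; exact_mod_cast Nat.div_mul_le_self n 2
  have hm_ge : ((n : ℝ) - 1) / 2 ≤ m := by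
    rw [div_le_iff₀ two_pos, sub_le_iff_le_add]; exact_mod_cast (by omega : n ≤ m * 2 + 1)
  have hpos : (0 : ℝ) < n := by positivity
  calc 2 * (arcsinPrimitive n ((n - 1) / 2) - arcsinPrimitive n 1)
      ≤ 2 * (arcsinPrimitive n m - arcsinPrimitive n 1) := by
        gcongr; exact arcsinPrimitive_mono hpos hm_ge
    _ ≤ 2 * ∑ i ∈ Ico 1 m, invSqrtMulSub n i := by
        gcongr; exact arcsinPrimitive_sub_le_sum_Ico (by omega) hmn
    _ ≤ ∑ i ∈ Ico 1 m, invSqrtMulSub n i + ∑ i ∈ Ico 1 (n + 1 - m), invSqrtMulSub n i := by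
        linarith [sum_Ico_invSqrtMulSub_mono (n : ℝ) (show m ≤ n + 1 - m by omega)]
    _ = _ := (sum_Ico_invSqrtMulSub_eq_add (by omega) (by omega)).symm

lemma sum_le_two_mul_invSqrtMulSub_sub {n : ℕ} (hn : 3 ≤ n) :
    ∑ i ∈ Ico 1 n, invSqrtMulSub n i ≤
      2 * (invSqrtMulSub n 1 - arcsinPrimitive n 1) := by
  set m := n / 2 + 1
  have hmn : ((m - 1 : ℕ) : ℝ) ≤ n / 2 := by
    rw [le_div_iff₀ two_pos]; exact_mod_cast (by omega : (m - 1) * 2 ≤ n)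
  have hpos : (0 : ℝ) < n := by positivity
  have hhalf : arcsinPrimitive n ((n : ℝ) / 2) = 0 := by
    rw [arcsinPrimitive, show 2 * ((n : ℝ) / 2) / n - 1 = 0 by field_simp; ring, arcsin_zero]
  have hshift : ∑ i ∈ Ico 2 m, invSqrtMulSub n i =
      ∑ i ∈ Ico 1 (m - 1), invSqrtMulSub n (i + 1 : ℕ) := by
    rw [sum_Ico_add' (fun i : ℕ => invSqrtMulSub n i)]
    congr 2
  calc ∑ i ∈ Ico 1 n, invSqrtMulSub n i
      = ∑ i ∈ Ico 1 m, invSqrtMulSub n i + ∑ i ∈ Ico 1 (n + 1 - m), invSqrtMulSub n i :=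
        sum_Ico_invSqrtMulSub_eq_add (by omega) (by omega)
    _ ≤ 2 * ∑ i ∈ Ico 1 m, invSqrtMulSub n i := by
        linarith [sum_Ico_invSqrtMulSub_mono (n : ℝ) (show n + 1 - m ≤ m by omega)]
    _ = 2 * (invSqrtMulSub n 1 + ∑ i ∈ Ico 1 (m - 1), invSqrtMulSub n (i + 1 : ℕ)) := by
        rw [sum_eq_sum_Ico_succ_bot (by omega), hshift, Nat.cast_one]
    _ ≤ 2 * (invSqrtMulSub n 1 + (arcsinPrimitive n (m - 1 : ℕ) - arcsinPrimitive n 1)) := by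
        gcongr; exact sum_Ico_le_arcsinPrimitive_sub (by omega) hmn
    _ ≤ 2 * (invSqrtMulSub n 1 - arcsinPrimitive n 1) := by
        have := arcsinPrimitive_mono hpos hmn
        rw [hhalf] at this
        linarith

lemma tendsto_two_mul_sub_arcsinPrimitive_one {ε : ℕ → ℝ} (hε : Tendsto ε atTop (𝓝 0)) :
    Tendsto (fun n : ℕ => 2 * (ε n - arcsinPrimitive n 1)) atTop (𝓝 π) := by
  have harg : Tendsto (fun n : ℕ => 2 * 1 / (n : ℝ) - 1) atTop (𝓝 (-1)) := by
    simpa using (tendsto_const_div_atTop_nhds_zero_nat (2 * 1 : ℝ)).sub_const 1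
  have hprim : Tendsto (fun n : ℕ => arcsinPrimitive n 1) atTop (𝓝 (-(π / 2))) := by
    rw [← arcsin_neg_one]
    exact (continuous_arcsin.tendsto _).comp harg
  convert (hε.sub hprim).const_mul 2 using 2
  ring

lemma tendsto_arcsinPrimitive_half_pred :
    Tendsto (fun n : ℕ => arcsinPrimitive n ((n - 1) / 2)) atTop (𝓝 0) := by
  have harg : Tendsto (fun n : ℕ => -(n : ℝ)⁻¹) atTop (𝓝 0) := by
    simpa using (tendsto_inv_atTop_nhds_zero_nat (𝕜 := ℝ)).neg
  rw [← arcsin_zero]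
  refine ((continuous_arcsin.tendsto _).comp harg).congr' ?_
  filter_upwards [eventually_ne_atTop 0] with n hn
  have : (n : ℝ) ≠ 0 := Nat.cast_ne_zero.2 hn
  simp only [Function.comp, arcsinPrimitive]
  congr 1
  field_simp
  ring

lemma tendsto_invSqrtMulSub_one :
    Tendsto (fun n : ℕ => invSqrtMulSub n 1) atTop (𝓝 0) := by
  have h : Tendsto (fun n : ℕ => (n : ℝ) - 1) atTop atTop :=
    tendsto_atTop_add_const_right _ _ tendsto_natCast_atTop_atTop
  simp only [invSqrtMulSub, one_mul]
  exact (tendsto_sqrt_atTop.comp h).inv_tendsto_atTop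

lemma tendsto_sum_Ico_invSqrtMulSub :
    Tendsto (fun n : ℕ => ∑ i ∈ Ico 1 n, invSqrtMulSub n i) atTop (𝓝 π) := by
  refine tendsto_of_tendsto_of_tendsto_of_le_of_le'
    (tendsto_two_mul_sub_arcsinPrimitive_one tendsto_arcsinPrimitive_half_pred)
    (tendsto_two_mul_sub_arcsinPrimitive_one tendsto_invSqrtMulSub_one) ?_ ?_
  · filter_upwards [eventually_ge_atTop 2] with n hn
    exact two_mul_arcsinPrimitive_sub_le_sum hn
  · filter_upwards [eventually_ge_atTop 3] with n hn
    exact sum_le_two_mul_invSqrtMulSub_sub hn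

lemma sum_sqrt_div_eq_sqrt_mul_sum {n : ℕ} (hn : 2 ≤ n) :
    ∑ i ∈ Icc 1 (n - 1), √(((n : ℝ) - 2) / ((i : ℝ) * ((n : ℝ) - (i : ℝ)))) =
      √((n : ℝ) - 2) * ∑ i ∈ Ico 1 n, invSqrtMulSub n i := by
  have h2 : (0 : ℝ) ≤ n - 2 := by rw [sub_nonneg]; exact_mod_cast hn
  rw [← Ico_add_one_right_eq_Icc, Nat.sub_add_cancel (by omega), mul_sum]
  refine sum_congr rfl fun i _ => ?_
  rw [sqrt_div h2, invSqrtMulSub, div_eq_mul_inv]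

/-- `GG(P_n) ~ π √(n-2)` as `n → ∞`, where
`GG(P_n) = Σ_{i=1}^{n-1} √((n-2)/(i(n-i)))`. -/
theorem stmt_6 :
    Tendsto (fun n : ℕ =>
        (∑ i ∈ Finset.Icc 1 (n - 1),
            Real.sqrt (((n : ℝ) - 2) / ((i : ℝ) * ((n : ℝ) - (i : ℝ))))) /
          (Real.pi * Real.sqrt ((n : ℝ) - 2))) atTop (nhds 1) := by
  have h := tendsto_sum_Ico_invSqrtMulSub.div_const π
  rw [div_self pi_ne_zero] at h
  refine h.congr' ?_
  filter_upwards [eventually_ge_atTop 3] with n hn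
  have hsqrt : √((n : ℝ) - 2) ≠ 0 := by
    rw [sqrt_ne_zero', sub_pos]; exact_mod_cast hn
  rw [sum_sqrt_div_eq_sqrt_mul_sum (by omega), mul_comm π, mul_div_mul_left _ _ hsqrt]
end

section
/- For any connected bipartite graph G with bipartition sizes n₁ and n₂, NGG(G)² ≤ n₁ · n₂; consequently NGG(G) ≤ √(⌊n/2⌋⌈n/2⌉) where n = n₁ + n₂. -/
open Finset Real
open scoped Classical

/-! Orient every edge from its end `u ∈ U` to its end `v ∈ W`. By Cauchy–Schwarz,
`NGG² ≤ (Σ 1/n_u) (Σ 1/n_v)` over the oriented edges. A bipartite graph is triangle-free, so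
`u` and its neighbours other than `v` are all closer to `u` than to `v`, giving `n_u ≥ deg u`.
Hence the edges at a fixed vertex contribute at most `deg u · (1/deg u) ≤ 1`, and the two
factors are at most `|U|` and `|W|`. Finally `ab ≤ ⌊n/2⌋⌈n/2⌉` whenever `a + b = n`. -/

theorem Nat.mul_le_div_two_mul_add_one_div_two (a b : ℕ) :
    a * b ≤ (a + b) / 2 * ((a + b + 1) / 2) := by
  generalize hq : (a + b) / 2 = q
  generalize hr : (a + b + 1) / 2 = r
  -- `q * r - a * b = (q - a) * (r - a)`, and no integer lies strictly between `q` and `r`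
  have hprod : (0 : ℤ) ≤ ((q : ℤ) - a) * ((r : ℤ) - a) := by
    rcases le_or_gt a q with h | h
    · exact mul_nonneg (by omega) (by omega)
    · exact mul_nonneg_of_nonpos_of_nonpos (by omega) (by omega)
  have hb : (b : ℤ) = q + r - a := by omega
  zify
  nlinarith

namespace SimpleGraph

variable {V : Type*} {G : SimpleGraph V}

lemma one_lt_dist_of_adj_of_adj (hG : G.CliqueFree 3) {x u v : V} (hxu : G.Adj x u)
    (huv : G.Adj u v) (hxv : x ≠ v) : 1 < G.dist x v := by
  have hreach : G.Reachable x v := hxu.reachable.trans huv.reachable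
  have hne_zero : G.dist x v ≠ 0 := by rwa [ne_eq, hreach.dist_eq_zero_iff]
  have hne_one : G.dist x v ≠ 1 := by
    rw [ne_eq, dist_eq_one_iff_adj]
    exact G.isIndepSet_neighborSet_of_triangleFree hG u hxu.symm huv hxv
  omega

variable [Fintype V]

lemma degree_le_closerCount (hG : G.CliqueFree 3) {u v : V} (huv : G.Adj u v) :
    G.degree u ≤ closerCount G u v := by
  -- `swap u v` sends `v` to `u` and fixes the other neighbours of `u`
  refine card_le_card_of_injOn (Equiv.swap u v) (fun x hx => ?_) (Equiv.injective _).injOn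
  rw [mem_coe, mem_neighborFinset] at hx
  simp only [coe_filter, mem_univ, true_and, Set.mem_ofPred_eq]
  by_cases hxv : x = v
  · simp [hxv, dist_eq_one_iff_adj.2 huv]
  · rw [Equiv.swap_apply_of_ne_of_ne hx.ne' hxv, dist_eq_one_iff_adj.2 hx.symm]
    exact one_lt_dist_of_adj_of_adj hG hx.symm huv hxv

noncomputable def invCloserCount (G : SimpleGraph V) (u v : V) : ℝ :=
  if G.Adj u v then (closerCount G u v : ℝ)⁻¹ else 0

lemma invCloserCount_nonneg (u v : V) : 0 ≤ invCloserCount G u v := by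
  unfold invCloserCount; split_ifs <;> positivity

lemma sum_invCloserCount_le_one (hG : G.CliqueFree 3) (u : V) :
    ∑ v, invCloserCount G u v ≤ 1 :=
  calc ∑ v, invCloserCount G u v
      ≤ ∑ v, if G.Adj u v then (G.degree u : ℝ)⁻¹ else 0 := by
        refine sum_le_sum fun v _ => ?_
        unfold invCloserCount
        split_ifs with huv
        · have hdeg : 0 < G.degree u := G.degree_pos_iff_exists_adj u |>.2 ⟨v, huv⟩
          exact inv_anti₀ (by exact_mod_cast hdeg) (by exact_mod_cast degree_le_closerCount hG huv)
        · rfl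
    _ = G.degree u * (G.degree u : ℝ)⁻¹ := by
        rw [← sum_filter, sum_const, nsmul_eq_mul, ← neighborFinset_eq_filter,
          card_neighborFinset_eq_degree]
    _ ≤ 1 := mul_inv_le_one

section Bipartite

variable {U W : Finset V}

lemma isBipartiteWith_of_adj_mem_iff (hdisj : Disjoint U W)
    (hcover : U ∪ W = univ) (hbip : ∀ u v, G.Adj u v → (u ∈ U ↔ v ∈ W)) :
    G.IsBipartiteWith U W := by
  refine ⟨disjoint_coe.2 hdisj, fun u v huv => ?_⟩
  have hcov (x : V) : x ∈ U ∨ x ∈ W := mem_union.1 (hcover ▸ Finset.mem_univ x)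
  have hu_not_both : ¬ (u ∈ U ∧ u ∈ W) := fun h => Finset.disjoint_left.1 hdisj h.1 h.2
  have := hbip u v huv
  have := hcov u
  have := hcov v
  simp only [mem_coe]
  tauto

lemma IsBipartiteWith.sum_sum_comm {M : Type*} [AddCommMonoid M]
    (h : G.IsBipartiteWith U W) {f : V → V → M} (hf : ∀ u v, ¬ G.Adj u v → f u v = 0) :
    ∑ w ∈ W, ∑ v, f w v = ∑ u ∈ U, ∑ v, f v u :=
  calc ∑ w ∈ W, ∑ v, f w v
      = ∑ w ∈ W, ∑ u ∈ U, f w u := sum_congr rfl fun w hw => (sum_subset (subset_univ U)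
        fun v _ hv => hf w v fun hwv => hv (h.symm.mem_of_mem_adj hw hwv)).symm
    _ = ∑ u ∈ U, ∑ w ∈ W, f w u := sum_comm
    _ = ∑ u ∈ U, ∑ v, f v u := sum_congr rfl fun u hu => sum_subset (subset_univ W)
        fun v _ hv => hf v u fun hvu => hv (h.mem_of_mem_adj hu hvu.symm)

lemma IsBipartiteWith.sum_sum_eq_sum_sum_add {M : Type*} [AddCommMonoid M]
    (h : G.IsBipartiteWith U W) (hcover : U ∪ W = univ) {f : V → V → M}
    (hf : ∀ u v, ¬ G.Adj u v → f u v = 0) :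
    ∑ u, ∑ v, f u v = ∑ u ∈ U, ∑ v, (f u v + f v u) :=
  calc ∑ u, ∑ v, f u v = ∑ u ∈ U ∪ W, ∑ v, f u v := by rw [hcover]
    _ = ∑ u ∈ U, ∑ v, (f u v + f v u) := by
      simp only [sum_union (disjoint_coe.1 h.disjoint), h.sum_sum_comm hf, sum_add_distrib]

lemma ite_adj_one_div_sqrt_closerCount_eq (u v : V) :
    (if G.Adj u v then 1 / √((closerCount G u v : ℝ) * closerCount G v u) else 0) =
      √(invCloserCount G u v * invCloserCount G v u) := by
  by_cases huv : G.Adj u v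
  · simp only [invCloserCount, huv, huv.symm, if_true, one_div, ← mul_inv, Real.sqrt_inv]
  · simp [invCloserCount, huv]

lemma IsBipartiteWith.NGG_eq_sum_sqrt (h : G.IsBipartiteWith U W) (hcover : U ∪ W = univ) :
    NGG G = ∑ u ∈ U, ∑ v, √(invCloserCount G u v * invCloserCount G v u) := by
  simp only [NGG, ite_adj_one_div_sqrt_closerCount_eq]
  rw [h.sum_sum_eq_sum_sum_add hcover fun u v huv => by simp [invCloserCount, huv]]
  have hsymm : ∀ u v, √(invCloserCount G u v * invCloserCount G v u) +
      √(invCloserCount G v u * invCloserCount G u v) =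
        2 * √(invCloserCount G u v * invCloserCount G v u) := fun u v => by
    rw [mul_comm (invCloserCount G v u)]; ring
  simp only [hsymm, ← mul_sum]
  ring

lemma IsBipartiteWith.NGG_sq_le (h : G.IsBipartiteWith U W) (hcover : U ∪ W = univ) :
    NGG G ^ 2 ≤
      (∑ u ∈ U, ∑ v, invCloserCount G u v) * ∑ u ∈ U, ∑ v, invCloserCount G v u := by
  have hCS := sum_mul_sq_le_sq_mul_sq (U ×ˢ univ) (fun p => √(invCloserCount G p.1 p.2))
    (fun p => √(invCloserCount G p.2 p.1))
  simp only [sum_product, ← Real.sqrt_mul (invCloserCount_nonneg _ _),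
    Real.sq_sqrt (invCloserCount_nonneg _ _)] at hCS
  rwa [h.NGG_eq_sum_sqrt hcover]

theorem IsBipartiteWith.NGG_sq_le_card_mul_card (h : G.IsBipartiteWith U W)
    (hcover : U ∪ W = univ) : NGG G ^ 2 ≤ #U * #W := by
  have hG : G.CliqueFree 3 := h.isBipartite.cliqueFree (by norm_num)
  have hsum_le_card (X : Finset V) : ∑ u ∈ X, ∑ v, invCloserCount G u v ≤ #X :=
    (sum_le_sum fun u _ => sum_invCloserCount_le_one hG u).trans (by simp)
  have hswap : ∑ u ∈ U, ∑ v, invCloserCount G v u = ∑ w ∈ W, ∑ v, invCloserCount G w v :=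
    (h.sum_sum_comm fun u v huv => by simp [invCloserCount, huv]).symm
  calc NGG G ^ 2
      ≤ (∑ u ∈ U, ∑ v, invCloserCount G u v) * ∑ u ∈ U, ∑ v, invCloserCount G v u :=
        h.NGG_sq_le hcover
    _ ≤ #U * #W := by
        rw [hswap]
        exact mul_le_mul (hsum_le_card U) (hsum_le_card W)
          (sum_nonneg fun _ _ => sum_nonneg fun _ _ => invCloserCount_nonneg _ _) (by positivity)

end Bipartite

end SimpleGraph

theorem stmt_9_general {V : Type*} [Fintype V] (G : SimpleGraph V)
    (U W : Finset V)
    (hdisj : Disjoint U W) (hcover : U ∪ W = Finset.univ)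
    (hbip : ∀ u v : V, G.Adj u v → (u ∈ U ↔ v ∈ W)) :
    NGG G ^ 2 ≤ (U.card : ℝ) * (W.card : ℝ) ∧
    NGG G ≤ Real.sqrt ((Fintype.card V / 2 : ℕ) * ((Fintype.card V + 1) / 2 : ℕ)) := by
  have hG := SimpleGraph.isBipartiteWith_of_adj_mem_iff hdisj hcover hbip
  have hUW := hG.NGG_sq_le_card_mul_card hcover
  have hcard : #U + #W = Fintype.card V := by
    rw [← card_union_of_disjoint hdisj, hcover, card_univ]
  refine ⟨hUW, (le_abs_self _).trans (Real.abs_le_sqrt (hUW.trans ?_))⟩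
  rw [← hcard]
  exact_mod_cast Nat.mul_le_div_two_mul_add_one_div_two _ _

/-- For a connected bipartite graph with bipartition sizes `n₁, n₂`,
`NGG(G)² ≤ n₁ n₂`; consequently `NGG(G) ≤ √(⌊n/2⌋⌈n/2⌉)` where `n = n₁ + n₂`. -/
theorem stmt_9 {V : Type*} [Fintype V] (G : SimpleGraph V)
    (hconn : G.Connected) (U W : Finset V)
    (hdisj : Disjoint U W) (hcover : U ∪ W = Finset.univ)
    (hbip : ∀ u v : V, G.Adj u v → (u ∈ U ↔ v ∈ W)) :
    NGG G ^ 2 ≤ (U.card : ℝ) * (W.card : ℝ) ∧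
    NGG G ≤ Real.sqrt ((Fintype.card V / 2 : ℕ) * ((Fintype.card V + 1) / 2 : ℕ)) :=
  stmt_9_general G U W hdisj hcover hbip
end

section
/- For all even n ≥ 8, Σ_{i=1}^{n−1} 1/√(i(n−i)) > 2; that is, NGG(P_n) > NGG(C_n). -/
/-!
The two end terms equal `1/√(n-1)` each, and by AM-GM every middle term `1/√(i(n-i))` is at
least `2/n`. Hence the sum is at least `2/√(n-1) + 2(n-3)/n`, which exceeds `2` exactly when
`3√(n-1) < n`, i.e. `n² - 9n + 9 > 0`; this holds from `n = 8` on.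
-/

open Finset Real

lemma two_div_le_one_div_sqrt_mul_sub {n x : ℝ} (hx : 0 < x) (hxn : x < n) :
    2 / n ≤ 1 / √(x * (n - x)) := by
  have hsqrt : √(x * (n - x)) ≤ n / 2 :=
    sqrt_le_iff.mpr ⟨by linarith, by nlinarith [sq_nonneg (x - n / 2)]⟩
  calc 2 / n = 1 / (n / 2) := by rw [one_div_div]
    _ ≤ 1 / √(x * (n - x)) :=
      one_div_le_one_div_of_le (sqrt_pos.mpr (mul_pos hx (by linarith))) hsqrt

lemma sum_Icc_one_div_sqrt_mul_sub_eq (n : ℕ) (hn : 3 ≤ n) :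
    ∑ i ∈ Icc 1 (n - 1), 1 / √((i : ℝ) * (n - i)) =
      2 / √((n : ℝ) - 1) + ∑ i ∈ Icc 2 (n - 2), 1 / √((i : ℝ) * (n - i)) := by
  have hsplit : Icc 1 (n - 1) = insert 1 (insert (n - 1) (Icc 2 (n - 2))) := by
    ext i
    simp only [mem_Icc, mem_insert]
    omega
  rw [hsplit, sum_insert (by simp only [mem_insert, mem_Icc]; omega),
    sum_insert (by simp only [mem_Icc]; omega), ← add_assoc]
  push_cast [show 1 ≤ n by omega]
  ring_nf

lemma mul_two_div_le_sum_Icc_one_div_sqrt_mul_sub (n : ℕ) (hn : 3 ≤ n) :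
    ((n : ℝ) - 3) * (2 / n) ≤ ∑ i ∈ Icc 2 (n - 2), 1 / √((i : ℝ) * (n - i)) := by
  have hterm : ∀ i ∈ Icc 2 (n - 2), (2 : ℝ) / n ≤ 1 / √((i : ℝ) * (n - i)) := by
    intro i hi
    rw [mem_Icc] at hi
    exact two_div_le_one_div_sqrt_mul_sub (by norm_cast; omega) (by norm_cast; omega)
  have hcard : ((#(Icc 2 (n - 2)) : ℕ) : ℝ) = n - 3 := by
    rw [Nat.card_Icc, show n - 2 + 1 - 2 = n - 3 by omega, Nat.cast_sub hn]
    norm_num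
  simpa only [nsmul_eq_mul, hcard] using card_nsmul_le_sum _ _ _ hterm

lemma two_lt_two_div_sqrt_sub_one_add {n : ℝ} (hn : 8 ≤ n) :
    2 < 2 / √(n - 1) + (n - 3) * (2 / n) := by
  have hs : √(n - 1) ^ 2 = n - 1 := sq_sqrt (by linarith)
  have hspos : 0 < √(n - 1) := sqrt_pos.mpr (by linarith)
  have h3s : 3 * √(n - 1) < n := by nlinarith [sq_nonneg (2 * √(n - 1) - 5)]
  have hkey : 6 / n < 2 / √(n - 1) := by
    rw [div_lt_div_iff₀ (by linarith) hspos]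
    linarith
  have heq : (n - 3) * (2 / n) = 2 - 6 / n := by field_simp; ring
  linarith

theorem stmt_13_general (n : ℕ) (hn : 8 ≤ n) :
    (2 : ℝ) < ∑ i ∈ Finset.Icc 1 (n - 1), 1 / Real.sqrt ((i : ℝ) * ((n : ℝ) - (i : ℝ))) := by
  rw [sum_Icc_one_div_sqrt_mul_sub_eq n (by omega)]
  calc (2 : ℝ) < 2 / √((n : ℝ) - 1) + ((n : ℝ) - 3) * (2 / n) :=
        two_lt_two_div_sqrt_sub_one_add (by exact_mod_cast hn)
    _ ≤ _ := by gcongr; exact mul_two_div_le_sum_Icc_one_div_sqrt_mul_sub n (by omega)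

/-- For all even `n ≥ 8`, `Σ_{i=1}^{n-1} 1/√(i(n-i)) > 2`, i.e.
`NGG(P_n) > NGG(C_n)`. -/
theorem stmt_13 (n : ℕ) (hn : 8 ≤ n) (heven : Even n) :
    (2 : ℝ) < ∑ i ∈ Finset.Icc 1 (n - 1), 1 / Real.sqrt ((i : ℝ) * ((n : ℝ) - (i : ℝ))) :=
  stmt_13_general n hn
end

section
/- For all integers k ≥ 4, Σ_{i=1}^{2k} 1/√(i(2k+1−i)) > 1/√(2k) + 2k/√(k(k+1)); that is, NGG(P_n) > NGG(C'_n) for odd n = 2k+1 ≥ 9. -/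
/-!
Write `f i = 1/√(i(2k+1-i))` and `c = 1/√(k(k+1))`. Since `i + (2k+1-i) = 2k+1`, the product
`i(2k+1-i)` is largest at `i ∈ {k, k+1}`, so every term satisfies `f i ≥ c`; and `f` is symmetric
under `i ↦ 2k+1-i`. Hence the sum is at least `2(f 1 + f 2 + f 3) + (2k-6)c`, and the claim
reduces to `f 1 + 2 f 2 + 2 f 3 > 6c`. Each ratio `f j / c` (`j = 1, 2, 3`) is increasing in `k`,
so it suffices to bound it below by its value at `k = 4`.
-/

open Finset Real

lemma div_sqrt_le_one_div_sqrt {q x y : ℝ} (hx : 0 < x) (hq : 0 < q) (h : q ^ 2 * x ≤ y) :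
    q / √y ≤ 1 / √x := by
  have hy : 0 < y := lt_of_lt_of_le (by positivity) h
  rw [div_le_div_iff₀ (sqrt_pos.2 hy) (sqrt_pos.2 hx), one_mul, ← sqrt_sq hq.le,
    ← sqrt_mul (sq_nonneg q)]
  exact sqrt_le_sqrt h

lemma five_div_sqrt_lt {k : ℝ} (hk : 4 ≤ k) :
    5 / √(k * (k + 1)) < 1 / √(2 * k) + 2 / √(2 * (2 * k - 1)) + 1 / √(3 * (2 * k - 2)) := by
  -- `30/19`, `43/36`, `20/19` are rational lower bounds for `√(5/2)`, `√(10/7)`, `√(10/9)`,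
  -- the three ratios at `k = 4`; they sum to more than `5`.
  have h₁ := div_sqrt_le_one_div_sqrt (q := 30 / 19) (x := 2 * k) (y := k * (k + 1))
    (by linarith) (by norm_num) (by nlinarith)
  have h₂ := div_sqrt_le_one_div_sqrt (q := 43 / 36) (x := 2 * (2 * k - 1)) (y := k * (k + 1))
    (by linarith) (by norm_num) (by nlinarith)
  have h₃ := div_sqrt_le_one_div_sqrt (q := 20 / 19) (x := 3 * (2 * k - 2)) (y := k * (k + 1))
    (by linarith) (by norm_num) (by nlinarith)
  have hpos : 0 < (√(k * (k + 1)))⁻¹ := inv_pos.2 (sqrt_pos.2 (by nlinarith))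
  simp only [div_eq_mul_inv, one_mul] at *
  linarith

lemma mul_two_mul_add_one_sub_le (n i : ℕ) : (i : ℝ) * (2 * n + 1 - i) ≤ n * (n + 1) := by
  rcases le_or_gt i n with h | h
  · have : (i : ℝ) ≤ n := by exact_mod_cast h
    nlinarith
  · have : (n : ℝ) + 1 ≤ i := by exact_mod_cast h
    nlinarith

lemma Icc_one_eq_Ioc_zero (n : ℕ) : Icc 1 n = Ioc 0 n := Icc_add_one_left_eq_Ioc 0 n

lemma sum_Icc_one_two_mul_of_symm {M : Type*} [AddCommMonoid M] {f : ℕ → M} {k : ℕ}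
    (hf : ∀ i ≤ 2 * k + 1, f (2 * k + 1 - i) = f i) :
    ∑ i ∈ Icc 1 (2 * k), f i = 2 • ∑ i ∈ Icc 1 k, f i := by
  rw [Icc_one_eq_Ioc_zero, Icc_one_eq_Ioc_zero, two_nsmul,
    ← sum_Ioc_consecutive f (Nat.zero_le k) (by omega : k ≤ 2 * k)]
  congr 1
  refine sum_nbij' (fun i ↦ 2 * k + 1 - i) (fun i ↦ 2 * k + 1 - i) ?_ ?_ ?_ ?_ ?_ <;>
    intro i hi <;> simp only [mem_Ioc] at hi ⊢
  exacts [by omega, by omega, by omega, by omega, (hf i (by omega)).symm]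

lemma sum_Icc_add_mul_le_sum_Icc {f : ℕ → ℝ} {c : ℝ} {m n : ℕ} (hmn : m ≤ n)
    (hf : ∀ i ∈ Icc 1 n, c ≤ f i) :
    ∑ i ∈ Icc 1 m, f i + (n - m) * c ≤ ∑ i ∈ Icc 1 n, f i := by
  simp only [Icc_one_eq_Ioc_zero] at *
  rw [← sum_Ioc_consecutive f (Nat.zero_le m) hmn]
  gcongr
  have := card_nsmul_le_sum (Ioc m n) f c fun i hi ↦ hf i (Ioc_subset_Ioc_left (Nat.zero_le m) hi)
  rwa [Nat.card_Ioc, nsmul_eq_mul, Nat.cast_sub hmn] at this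

/-- For all integers `k ≥ 4`,
`Σ_{i=1}^{2k} 1/√(i(2k+1-i)) > 1/√(2k) + 2k/√(k(k+1))`;
i.e. `NGG(P_n) > NGG(C'_n)` for odd `n = 2k+1 ≥ 9`. -/
theorem stmt_19 (k : ℕ) (hk : 4 ≤ k) :
    1 / Real.sqrt (2 * (k : ℝ)) + 2 * (k : ℝ) / Real.sqrt ((k : ℝ) * ((k : ℝ) + 1)) <
      ∑ i ∈ Finset.Icc 1 (2 * k),
        1 / Real.sqrt ((i : ℝ) * (2 * (k : ℝ) + 1 - (i : ℝ))) := by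
  set f : ℕ → ℝ := fun i ↦ 1 / √((i : ℝ) * (2 * k + 1 - i)) with hf
  set c := 1 / √((k : ℝ) * (k + 1))
  have hK : (4 : ℝ) ≤ k := by exact_mod_cast hk
  have hc : ∀ i ∈ Icc 1 (2 * k), c ≤ f i := fun i hi ↦ by
    rw [mem_Icc] at hi
    have hi₁ : (1 : ℝ) ≤ i := by exact_mod_cast hi.1
    have hi₂ : (i : ℝ) ≤ 2 * k := by exact_mod_cast hi.2
    exact div_sqrt_le_one_div_sqrt (by nlinarith) one_pos
      (by simpa using mul_two_mul_add_one_sub_le k i)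
  have hsymm : ∑ i ∈ Icc 1 (2 * k), f i = 2 * ∑ i ∈ Icc 1 k, f i := by
    rw [sum_Icc_one_two_mul_of_symm fun i hi ↦ ?_, two_nsmul, two_mul]
    simp only [hf, Nat.cast_sub hi]
    push_cast
    ring_nf
  have hlow : ∑ i ∈ Icc 1 3, f i + (k - 3) * c ≤ ∑ i ∈ Icc 1 k, f i := by
    exact_mod_cast sum_Icc_add_mul_le_sum_Icc (by omega)
      fun i hi ↦ hc i (Icc_subset_Icc_right (by omega) hi)
  have hf₁ : f 1 = 1 / √(2 * k) := by simp only [hf]; push_cast; ring_nf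
  have hboundary : 5 * c < f 1 + 2 * f 2 + f 3 := by
    convert five_div_sqrt_lt hK using 1 <;> simp only [hf, c] <;> push_cast <;> ring_nf
  have hf₃ : c ≤ f 3 := hc 3 (by simp; omega)
  calc 1 / √(2 * (k : ℝ)) + 2 * k / √(k * (k + 1)) = f 1 + 2 * k * c := by rw [hf₁]; ring
    _ < 2 * (∑ i ∈ Icc 1 3, f i + (k - 3) * c) := by
      rw [sum_Icc_succ_top (by norm_num), sum_Icc_succ_top (by norm_num), Icc_self, sum_singleton]
      linarith
    _ ≤ ∑ i ∈ Icc 1 (2 * k), f i := by rw [hsymm]; gcongr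
end
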